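/- For all continuous y : [0,T] → V and all continuously differentiable x : [0,T] → V with x(T) = 0, the parabolic space-time bilinear form satisfies the continuity bound |ℬ(y,x)| ≤ √2 · max{1, M} · (∫₀ᵀ ‖y(t)‖_V² dt)^{1/2} · N(x), where ℬ(y,x) = ∫₀ᵀ (⟪ι y(t), −ι x′(t)⟫_H + A(t)(y(t), x(t))) dt and N(x)² = ‖ι x(0)‖_H² + ∫₀ᵀ (‖x(t)‖_V² + ‖ι x′(t)‖_*²) dt. -/

import Mathlib

open RealInnerProductSpace

/-- The dual norm `‖h‖_* := sup_{0≠v∈V} ⟪h, ι v⟫_H / ‖v‖_V` of an element `h ∈ H`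
relative to a Gelfand triple map `ι : V → H`. -/
noncomputable def gelfandDualNorm {V H : Type*}
    [NormedAddCommGroup V] [InnerProductSpace ℝ V]
    [NormedAddCommGroup H] [InnerProductSpace ℝ H]
    (ι : V →L[ℝ] H) (h : H) : ℝ :=
  ⨆ v : {v : V // v ≠ 0}, ⟪h, ι v⟫ / ‖(v : V)‖

/-- The parabolic space-time bilinear form
`ℬ(y,x) = ∫₀ᵀ (⟪ι y(t), −ι x′(t)⟫_H + A(t)(y(t), x(t))) dt`. -/
noncomputable def parabolicForm {V H : Type*}
    [NormedAddCommGroup V] [InnerProductSpace ℝ V]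
    [NormedAddCommGroup H] [InnerProductSpace ℝ H] [CompleteSpace H]
    (ι : V →L[ℝ] H) (A : ℝ → V →ₗ[ℝ] V →ₗ[ℝ] ℝ) (T : ℝ)
    (y : ℝ → V) (x x' : ℝ → V) : ℝ :=
  ∫ t in (0 : ℝ)..T, (⟪ι (y t), -ι (x' t)⟫ + A t (y t) (x t))

/-- The test norm `N(x)` with
`N(x)² = ‖ι x(0)‖_H² + ∫₀ᵀ (‖x(t)‖_V² + ‖ι x′(t)‖_*²) dt`. -/
noncomputable def parabolicTestNorm {V H : Type*}
    [NormedAddCommGroup V] [InnerProductSpace ℝ V]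
    [NormedAddCommGroup H] [InnerProductSpace ℝ H]
    (ι : V →L[ℝ] H) (T : ℝ) (x x' : ℝ → V) : ℝ :=
  Real.sqrt (‖ι (x 0)‖ ^ 2 +
    ∫ t in (0 : ℝ)..T, (‖x t‖ ^ 2 + gelfandDualNorm ι (ι (x' t)) ^ 2))

open MeasureTheory Set

/-!
The dual norm `‖h‖_*` is the operator norm of the functional `v ↦ ⟪h, ι v⟫` on `V`, so
`|⟪ι y, ι x'⟫| ≤ ‖ι x'‖_* ‖y‖`; together with `|A(y, x)| ≤ M ‖y‖ ‖x‖` and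
`a + b ≤ √2 √(a² + b²)` this bounds the integrand of `ℬ(y, x)` by
`√2 max{1, M} ‖y‖ (‖x‖² + ‖ι x'‖_*²)^{1/2}`, and Cauchy–Schwarz in time finishes the proof.
-/

theorem add_le_sqrt_two_mul_sqrt_sq_add_sq (a b : ℝ) : a + b ≤ √2 * √(a ^ 2 + b ^ 2) := by
  rw [← Real.sqrt_mul zero_le_two]
  exact Real.le_sqrt_of_sq_le add_sq_le

theorem intervalIntegral_mul_le_sqrt_mul_sqrt {f g : ℝ → ℝ} {a b : ℝ} (hab : a ≤ b)
    (hf : ContinuousOn f (Icc a b)) (hg : ContinuousOn g (Icc a b))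
    (hf0 : ∀ t ∈ Icc a b, 0 ≤ f t) (hg0 : ∀ t ∈ Icc a b, 0 ≤ g t) :
    ∫ t in a..b, f t * g t ≤ √(∫ t in a..b, f t ^ 2) * √(∫ t in a..b, g t ^ 2) := by
  have memLp : ∀ u : ℝ → ℝ, ContinuousOn u (Icc a b) → MemLp u 2 (volume.restrict (Ioc a b)) :=
    fun u hu => (memLp_two_iff_integrable_sq
      ((hu.integrableOn_Icc.mono_set Ioc_subset_Icc_self).aestronglyMeasurable)).2
      ((hu.pow 2).integrableOn_Icc.mono_set Ioc_subset_Icc_self)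
  have nonneg : ∀ u : ℝ → ℝ, (∀ t ∈ Icc a b, 0 ≤ u t) → 0 ≤ᵐ[volume.restrict (Ioc a b)] u :=
    fun u hu => (ae_restrict_iff' measurableSet_Ioc).2
      (ae_of_all _ fun t ht => hu t (Ioc_subset_Icc_self ht))
  have hCS := integral_mul_le_Lp_mul_Lq_of_nonneg Real.HolderConjugate.two_two
    (nonneg f hf0) (nonneg g hg0) (by simpa using memLp f hf) (by simpa using memLp g hg)
  simp only [← Real.sqrt_eq_rpow, Real.rpow_two] at hCS
  simpa only [intervalIntegral.integral_of_le hab] using hCS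

section GelfandTriple

variable {V H : Type*} [NormedAddCommGroup V] [InnerProductSpace ℝ V]
  [NormedAddCommGroup H] [InnerProductSpace ℝ H]

theorem gelfandDualNorm_eq_opNorm (ι : V →L[ℝ] H) (h : H) :
    gelfandDualNorm ι h = ‖(innerSL ℝ h).comp ι‖ := by
  set ℓ := (innerSL ℝ h).comp ι
  have hℓ : ∀ v, ℓ v = ⟪h, ι v⟫ := fun v => rfl
  rcases subsingleton_or_nontrivial V with hV | hV
  · have : IsEmpty {v : V // v ≠ 0} := ⟨fun v => v.2 (Subsingleton.elim _ _)⟩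
    rw [gelfandDualNorm, Real.iSup_of_isEmpty, Subsingleton.elim ℓ 0, norm_zero]
  have hq : ∀ v : {v : V // v ≠ 0}, ⟪h, ι v⟫ / ‖(v : V)‖ ≤ ‖ℓ‖ := fun v =>
    div_le_of_le_mul₀ (norm_nonneg _) (norm_nonneg _) ((le_abs_self _).trans (ℓ.le_opNorm v))
  have hbdd : BddAbove (range fun v : {v : V // v ≠ 0} => ⟪h, ι v⟫ / ‖(v : V)‖) :=
    ⟨‖ℓ‖, forall_mem_range.2 hq⟩
  have habs : ∀ v : V, ‖ℓ v‖ ≤ gelfandDualNorm ι h * ‖v‖ := by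
    intro v
    rcases eq_or_ne v 0 with rfl | hv
    · simp
    have hpos := le_ciSup hbdd ⟨v, hv⟩
    have hneg := le_ciSup hbdd ⟨-v, neg_ne_zero.2 hv⟩
    simp only [map_neg, inner_neg_right, norm_neg, neg_div] at hneg
    rw [Real.norm_eq_abs, hℓ, ← div_le_iff₀ (norm_pos_iff.2 hv), ← abs_norm v, ← abs_div]
    exact abs_le.2 ⟨neg_le.1 hneg, hpos⟩
  obtain ⟨v, hv⟩ := exists_ne (0 : V)
  have : Nonempty {v : V // v ≠ 0} := ⟨⟨v, hv⟩⟩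
  have hnonneg : 0 ≤ gelfandDualNorm ι h :=
    nonneg_of_mul_nonneg_left ((norm_nonneg _).trans (habs v)) (norm_pos_iff.2 hv)
  exact le_antisymm (ciSup_le hq) (ℓ.opNorm_le_bound hnonneg habs)

theorem gelfandDualNorm_nonneg (ι : V →L[ℝ] H) (h : H) : 0 ≤ gelfandDualNorm ι h :=
  gelfandDualNorm_eq_opNorm ι h ▸ norm_nonneg _

theorem abs_inner_le_gelfandDualNorm_mul (ι : V →L[ℝ] H) (h : H) (v : V) :
    |⟪h, ι v⟫| ≤ gelfandDualNorm ι h * ‖v‖ :=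
  gelfandDualNorm_eq_opNorm ι h ▸ ((innerSL ℝ h).comp ι).le_opNorm v

theorem continuous_gelfandDualNorm (ι : V →L[ℝ] H) : Continuous (gelfandDualNorm ι) := by
  simp_rw [funext (gelfandDualNorm_eq_opNorm ι)]
  exact ((innerSL ℝ).continuous.clm_comp continuous_const).norm

theorem abs_parabolicIntegrand_le (ι : V →L[ℝ] H) {a : V →ₗ[ℝ] V →ₗ[ℝ] ℝ} {M : ℝ}
    (ha : ∀ u v, |a u v| ≤ M * ‖u‖ * ‖v‖) (y x x' : V) :
    |⟪ι y, -ι x'⟫ + a y x| ≤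
      √2 * max 1 M * (‖y‖ * √(‖x‖ ^ 2 + gelfandDualNorm ι (ι x') ^ 2)) := by
  set D := gelfandDualNorm ι (ι x')
  have hD : |⟪ι y, -ι x'⟫| ≤ D * ‖y‖ := by
    rw [inner_neg_right, abs_neg, real_inner_comm]
    exact abs_inner_le_gelfandDualNorm_mul ι _ y
  have hD0 : 0 ≤ D := gelfandDualNorm_nonneg ι _
  calc |⟪ι y, -ι x'⟫ + a y x| ≤ D * ‖y‖ + M * ‖y‖ * ‖x‖ :=
        (abs_add_le _ _).trans (add_le_add hD (ha y x))
    _ ≤ max 1 M * (‖y‖ * (‖x‖ + D)) := by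
        have h1 : D * ‖y‖ ≤ max 1 M * D * ‖y‖ := by
          gcongr; exact le_mul_of_one_le_left hD0 (le_max_left _ _)
        have h2 : M * ‖y‖ * ‖x‖ ≤ max 1 M * ‖y‖ * ‖x‖ := by gcongr; exact le_max_right _ _
        linarith
    _ ≤ max 1 M * (‖y‖ * (√2 * √(‖x‖ ^ 2 + D ^ 2))) := by
        gcongr
        exact add_le_sqrt_two_mul_sqrt_sq_add_sq _ _
    _ = √2 * max 1 M * (‖y‖ * √(‖x‖ ^ 2 + D ^ 2)) := by ring

end GelfandTriple

theorem parabolicForm_continuity_general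
    {V H : Type*} [NormedAddCommGroup V] [InnerProductSpace ℝ V]
    [NormedAddCommGroup H] [InnerProductSpace ℝ H] [CompleteSpace H]
    (ι : V →L[ℝ] H)
    (T : ℝ) (hT : 0 < T)
    (A : ℝ → V →ₗ[ℝ] V →ₗ[ℝ] ℝ)
    (M : ℝ)
    (hA_bdd : ∀ t ∈ Set.Icc (0 : ℝ) T, ∀ u v : V, |A t u v| ≤ M * ‖u‖ * ‖v‖)
    (y : ℝ → V) (hy : Continuous y)
    (x x' : ℝ → V) (hx : ∀ t, HasDerivAt x (x' t) t) (hx' : Continuous x') :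
    |parabolicForm ι A T y x x'| ≤
      Real.sqrt 2 * max 1 M * Real.sqrt (∫ t in (0 : ℝ)..T, ‖y t‖ ^ 2) *
        parabolicTestNorm ι T x x' := by
  have hxc : Continuous x := continuous_iff_continuousAt.2 fun t => (hx t).continuousAt
  have hD : Continuous fun t => gelfandDualNorm ι (ι (x' t)) :=
    (continuous_gelfandDualNorm ι).comp (ι.continuous.comp hx')
  set g := fun t => √(‖x t‖ ^ 2 + gelfandDualNorm ι (ι (x' t)) ^ 2)
  have hg : Continuous g := ((hxc.norm.pow 2).add (hD.pow 2)).sqrt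
  have hG : Continuous fun t => √2 * max 1 M * (‖y t‖ * g t) := by fun_prop
  have hg2 : ∀ t, g t ^ 2 = ‖x t‖ ^ 2 + gelfandDualNorm ι (ι (x' t)) ^ 2 := fun t =>
    Real.sq_sqrt (by positivity)
  calc |parabolicForm ι A T y x x'| ≤ ∫ t in (0 : ℝ)..T, √2 * max 1 M * (‖y t‖ * g t) := by
        rw [parabolicForm, ← Real.norm_eq_abs]
        exact intervalIntegral.norm_integral_le_of_norm_le hT.le (ae_of_all _ fun t ht =>
          abs_parabolicIntegrand_le ι (hA_bdd t (Ioc_subset_Icc_self ht)) (y t) (x t) (x' t))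
          (hG.intervalIntegrable _ _)
    _ = √2 * max 1 M * ∫ t in (0 : ℝ)..T, ‖y t‖ * g t := intervalIntegral.integral_const_mul _ _
    _ ≤ √2 * max 1 M * (√(∫ t in (0 : ℝ)..T, ‖y t‖ ^ 2) * √(∫ t in (0 : ℝ)..T, g t ^ 2)) := by
        gcongr
        exact intervalIntegral_mul_le_sqrt_mul_sqrt hT.le hy.norm.continuousOn hg.continuousOn
          (fun _ _ => norm_nonneg _) (fun _ _ => Real.sqrt_nonneg _)
    _ ≤ _ := by
        rw [← mul_assoc]
        gcongr
        rw [parabolicTestNorm]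
        simp only [hg2]
        exact Real.sqrt_le_sqrt (le_add_of_nonneg_left (sq_nonneg _))

/-- **Continuity of the parabolic space-time bilinear form.**
`|ℬ(y,x)| ≤ √2 · max{1, M} · (∫₀ᵀ ‖y‖_V²)^{1/2} · N(x)`. -/
theorem parabolicForm_continuity
    {V H : Type*} [NormedAddCommGroup V] [InnerProductSpace ℝ V] [CompleteSpace V]
    [NormedAddCommGroup H] [InnerProductSpace ℝ H] [CompleteSpace H]
    (ι : V →L[ℝ] H) (hι_inj : Function.Injective ι) (hι_dense : DenseRange ι)
    (T : ℝ) (hT : 0 < T)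
    (A : ℝ → V →ₗ[ℝ] V →ₗ[ℝ] ℝ)
    (hA_cont : ∀ u v : V, ContinuousOn (fun t => A t u v) (Set.Icc 0 T))
    (m M : ℝ) (hm : 0 < m) (hmM : m ≤ M)
    (hA_bdd : ∀ t ∈ Set.Icc (0 : ℝ) T, ∀ u v : V, |A t u v| ≤ M * ‖u‖ * ‖v‖)
    (hA_coer : ∀ t ∈ Set.Icc (0 : ℝ) T, ∀ v : V, m * ‖v‖ ^ 2 ≤ A t v v)
    (y : ℝ → V) (hy : Continuous y)
    (x x' : ℝ → V) (hx : ∀ t, HasDerivAt x (x' t) t) (hx' : Continuous x')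
    (hxT : x T = 0) :
    |parabolicForm ι A T y x x'| ≤
      Real.sqrt 2 * max 1 M * Real.sqrt (∫ t in (0 : ℝ)..T, ‖y t‖ ^ 2) *
        parabolicTestNorm ι T x x' :=
  parabolicForm_continuity_general ι T hT A M hA_bdd y hy x x' hx hx'
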